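/- Suppose A is a real n×n matrix and dt > 0 satisfies dt ≤ min over i of m_i / (A i i + ∑_{j≠i} |A i j|), where m_i > 0 and A i i + ∑_{j≠i} |A i j| > 0 for all i. Then for every eigenvalue μ of the matrix M⁻¹A (M the diagonal matrix with entries m_i), if μ is real and nonnegative, dt·μ ≤ 1. -/

import Mathlib

/-!
Apply Gerschgorin's circle theorem to `M⁻¹ A`, whose `i`-th row is the `i`-th row of `A`
divided by `m i`: a real eigenvalue `μ` satisfies `μ * m i ≤ A i i + ∑_{j ≠ i} |A i j|` for
some `i`. The time step condition at that row then gives `dt * μ ≤ 1`.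
-/

open Finset Matrix

variable {ι : Type*} [Fintype ι] [DecidableEq ι]

theorem Matrix.le_diag_add_sum_abs_of_mulVec_eq_smul (B : Matrix ι ι ℝ) {μ : ℝ} {v : ι → ℝ}
    (hv : v ≠ 0) (hev : B *ᵥ v = μ • v) :
    ∃ i, μ ≤ B i i + ∑ j ∈ univ.erase i, |B i j| := by
  have hμ : Module.End.HasEigenvalue (toLin' B) μ :=
    Module.End.hasEigenvalue_of_hasEigenvector
      ⟨Module.End.mem_eigenspace_iff.mpr (by rwa [toLin'_apply]), hv⟩
  obtain ⟨i, hi⟩ := eigenvalue_mem_ball hμ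
  rw [Metric.mem_closedBall, Real.dist_eq] at hi
  simp only [Real.norm_eq_abs] at hi
  exact ⟨i, by linarith [le_abs_self (μ - B i i)]⟩

theorem Matrix.inv_diagonal_of_ne_zero {K : Type*} [Field K] {m : ι → K} (hm : ∀ i, m i ≠ 0) :
    (diagonal m)⁻¹ = diagonal m⁻¹ :=
  inv_eq_right_inv <| by
    rw [diagonal_mul_diagonal, ← diagonal_one]
    exact congrArg diagonal (funext fun i => mul_inv_cancel₀ (hm i))

theorem Matrix.mul_le_diag_add_sum_abs_of_inv_diagonal_mul_mulVec_eq_smul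
    (A : Matrix ι ι ℝ) {m : ι → ℝ} (hm : ∀ i, 0 < m i) {μ : ℝ} {v : ι → ℝ}
    (hv : v ≠ 0) (hev : ((diagonal m)⁻¹ * A) *ᵥ v = μ • v) :
    ∃ i, μ * m i ≤ A i i + ∑ j ∈ univ.erase i, |A i j| := by
  obtain ⟨i, hi⟩ := le_diag_add_sum_abs_of_mulVec_eq_smul _ hv hev
  refine ⟨i, (le_div_iff₀ (hm i)).mp ?_⟩
  have hrow : ∀ j, ((diagonal m)⁻¹ * A) i j = A i j / m i := fun j => by
    rw [inv_diagonal_of_ne_zero fun i => (hm i).ne', diagonal_mul, Pi.inv_apply, inv_mul_eq_div]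
  simpa only [hrow, abs_div, abs_of_pos (hm i), ← sum_div, ← add_div] using hi

open Finset in
theorem gerschgorin_timestep_bound_general (n : ℕ) [NeZero n]
    (A : Matrix (Fin n) (Fin n) ℝ) (m : Fin n → ℝ) (hm : ∀ i, 0 < m i)
    (hr : ∀ i, 0 < A i i + ∑ j ∈ univ \ {i}, |A i j|)
    (dt : ℝ)
    (hdt : dt ≤ univ.inf' univ_nonempty
      (fun i => m i / (A i i + ∑ j ∈ univ \ {i}, |A i j|)))
    (mu : ℝ) (hmu : 0 ≤ mu)
    (v : Fin n → ℝ) (hv : v ≠ 0)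
    (hev : ((Matrix.diagonal m)⁻¹ * A).mulVec v = mu • v) :
    dt * mu ≤ 1 := by
  obtain ⟨i, hi⟩ := mul_le_diag_add_sum_abs_of_inv_diagonal_mul_mulVec_eq_smul A hm hv hev
  rw [← sdiff_singleton_eq_erase] at hi
  have hdt_i : dt ≤ m i / (A i i + ∑ j ∈ univ \ {i}, |A i j|) :=
    hdt.trans (inf'_le _ (mem_univ i))
  calc dt * mu ≤ m i / (A i i + ∑ j ∈ univ \ {i}, |A i j|) * mu :=
        mul_le_mul_of_nonneg_right hdt_i hmu
    _ = mu * m i / (A i i + ∑ j ∈ univ \ {i}, |A i j|) := by ring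
    _ ≤ 1 := (div_le_one (hr i)).mpr hi

open Finset in
/-- Gerschgorin-based time step bound: if `dt` is at most the minimum of
`m i / (A i i + ∑_{j ≠ i} |A i j|)`, then any real nonnegative eigenvalue `μ` of
`M⁻¹ * A` (with `M = diagonal m`) satisfies `dt * μ ≤ 1`. -/
theorem gerschgorin_timestep_bound (n : ℕ) [NeZero n]
    (A : Matrix (Fin n) (Fin n) ℝ) (m : Fin n → ℝ) (hm : ∀ i, 0 < m i)
    (hr : ∀ i, 0 < A i i + ∑ j ∈ univ \ {i}, |A i j|)
    (dt : ℝ) (hdt0 : 0 < dt)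
    (hdt : dt ≤ univ.inf' univ_nonempty
      (fun i => m i / (A i i + ∑ j ∈ univ \ {i}, |A i j|)))
    (mu : ℝ) (hmu : 0 ≤ mu)
    (v : Fin n → ℝ) (hv : v ≠ 0)
    (hev : ((Matrix.diagonal m)⁻¹ * A).mulVec v = mu • v) :
    dt * mu ≤ 1 :=
  gerschgorin_timestep_bound_general n A m hm hr dt hdt mu hmu v hv hev
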